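/- Let x : [s,∞) → ℝ^n be a continuously differentiable solution of the homogeneous bilinear equation ẋ(t) = A x(t) + Σ_{k=1}^m N_k x(t) u_k(t) with x(s) = x₀, and let Z̄(·, x₀x₀^T) be the solution of Ż̄ = A Z̄ + Z̄ A^T + Σ_{k=1}^m N_k Z̄ N_k^T with Z̄(0) = x₀ x₀^T. Then for all t ≥ s, x(t) x(t)^T ≼ exp(∫_s^t ‖u⁰(τ)‖₂² dτ) · Z̄(t−s, x₀x₀^T). -/

import Mathlib

/-!
Let `L Z = A Z + Z Aᵀ + Σ_k N_k Z N_kᵀ` and `Φ(t) = exp(∫_s^t ‖u⁰‖²) Z̄(t - s) - x(t) x(t)ᵀ`.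
Since `u_k N_k = u⁰_k N_k`, completing the square gives
`Φ' = ‖u⁰‖² Φ + L Φ + Σ_k (N_k x - u⁰_k x)(N_k x - u⁰_k x)ᵀ` with `Φ(s) = 0`.
If `P ≽ 0` and `P w = 0`, then `wᵀ (L P) w = Σ_k (N_kᵀ w)ᵀ P (N_kᵀ w) ≥ 0`, so the flow cannot leave
the positive semidefinite cone. To make this rigorous, add `ε e^{K r} I` to `Z̄`, where
`K I - L I ≻ 0`: the source term becomes positive definite, a first-touching-time argument keeps
the perturbed `Φ` positive definite, and we let `ε → 0`. `Z̄` is symmetric because `Z̄ - Z̄ᵀ` solves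
the linear ODE `Y' = L Y` with `Y(0) = 0`.
-/

open Matrix MeasureTheory Set Filter Topology Metric
open scoped Classical

-- Matrix-valued derivatives use the entrywise sup norm, which matches the entrywise derivatives in
-- the statement (`hasDerivAt_matrix_iff`).
attribute [local instance] Matrix.normedAddCommGroup Matrix.normedSpace

theorem isSymm_vecMulVec_self {ι : Type*} (x : ι → ℝ) : (vecMulVec x x).IsSymm :=
  transpose_vecMulVec x x

section

variable {ι κ : Type*} [Fintype ι] [Fintype κ]

theorem hasDerivAt_matrix_iff {m n : Type*} [Fintype m] [Fintype n] {P : ℝ → Matrix m n ℝ}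
    {P' : Matrix m n ℝ} {t : ℝ} :
    HasDerivAt P P' t ↔ ∀ i j, HasDerivAt (fun τ => P τ i j) (P' i j) t :=
  hasDerivAt_pi.trans (forall_congr' fun _ => hasDerivAt_pi)

theorem HasDerivAt.matrix_transpose {P : ℝ → Matrix ι ι ℝ} {P' : Matrix ι ι ℝ} {t : ℝ}
    (hP : HasDerivAt P P' t) : HasDerivAt (fun τ => (P τ)ᵀ) P'ᵀ t :=
  hasDerivAt_matrix_iff.2 fun i j => hasDerivAt_matrix_iff.1 hP j i

theorem HasDerivAt.dotProduct_mulVec {P : ℝ → Matrix ι ι ℝ} {P' : Matrix ι ι ℝ} {t : ℝ}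
    (hP : HasDerivAt P P' t) (v w : ι → ℝ) :
    HasDerivAt (fun τ => v ⬝ᵥ P τ *ᵥ w) (v ⬝ᵥ P' *ᵥ w) t := by
  simp only [dotProduct, mulVec, Finset.mul_sum]
  exact HasDerivAt.fun_sum fun i _ => HasDerivAt.fun_sum fun j _ =>
    ((hasDerivAt_matrix_iff.1 hP i j).mul_const (w j)).const_mul (v i)

theorem HasDerivAt.vecMulVec {x y : ℝ → ι → ℝ} {x' y' : ι → ℝ} {t : ℝ}
    (hx : HasDerivAt x x' t) (hy : HasDerivAt y y' t) :
    HasDerivAt (fun τ => vecMulVec (x τ) (y τ)) (vecMulVec x' (y t) + vecMulVec (x t) y') t :=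
  hasDerivAt_matrix_iff.2 fun i j =>
    (hasDerivAt_pi.1 hx i).mul (hasDerivAt_pi.1 hy j)

theorem HasDerivAt.nonpos_of_eventually_le_left {f : ℝ → ℝ} {f' t : ℝ} (hf : HasDerivAt f f' t)
    (h : ∀ᶠ τ in 𝓝[<] t, f t ≤ f τ) : f' ≤ 0 := by
  refine le_of_tendsto ((hasDerivAt_iff_tendsto_slope.1 hf).mono_left (nhdsLT_le_nhdsNE t)) ?_
  filter_upwards [h, self_mem_nhdsWithin] with τ hτ hτt
  rw [slope_def_field]
  exact div_nonpos_of_nonneg_of_nonpos (sub_nonneg.2 hτ) (sub_nonpos.2 (le_of_lt hτt))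

theorem isClosed_setOf_posSemidef : IsClosed {M : Matrix ι ι ℝ | M.PosSemidef} := by
  simp only [posSemidef_iff_dotProduct_mulVec, Set.ofPred_and, Set.ofPred_forall]
  exact (isClosed_eq continuous_id.matrix_conjTranspose continuous_id).inter <|
    isClosed_iInter fun v => isClosed_le continuous_const <|
      continuous_const.dotProduct (continuous_id.matrix_mulVec continuous_const)

theorem posSemidef_of_tendsto {α : Type*} {l : Filter α} [l.NeBot] {f : α → Matrix ι ι ℝ}
    {M : Matrix ι ι ℝ} (hf : Tendsto f l (𝓝 M)) (hpos : ∀ᶠ a in l, (f a).PosSemidef) :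
    M.PosSemidef :=
  isClosed_setOf_posSemidef.mem_of_tendsto hf hpos

theorem Matrix.IsHermitian.exists_norm_eq_one_of_not_posDef {M : Matrix ι ι ℝ}
    (hM : M.IsHermitian) (h : ¬M.PosDef) : ∃ w : ι → ℝ, ‖w‖ = 1 ∧ w ⬝ᵥ M *ᵥ w ≤ 0 := by
  obtain ⟨w, hw0, hw⟩ : ∃ w, w ≠ 0 ∧ w ⬝ᵥ M *ᵥ w ≤ 0 := by
    simpa using mt (PosDef.of_dotProduct_mulVec_pos hM) h
  refine ⟨‖w‖⁻¹ • w, norm_smul_inv_norm hw0, ?_⟩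
  rw [mulVec_smul, dotProduct_smul, smul_dotProduct, smul_eq_mul, smul_eq_mul]
  exact mul_nonpos_of_nonneg_of_nonpos (by positivity)
    (mul_nonpos_of_nonneg_of_nonpos (by positivity) hw)

theorem dotProduct_mulVec_le_sum_abs_mul (M : Matrix ι ι ℝ) (w : ι → ℝ) :
    w ⬝ᵥ M *ᵥ w ≤ (∑ i, ∑ j, |M i j|) * (w ⬝ᵥ w) := by
  have hsq : ∀ i, w i ^ 2 ≤ w ⬝ᵥ w := fun i => by
    simpa [dotProduct, sq] using
      Finset.single_le_sum (fun j _ => mul_self_nonneg (w j)) (Finset.mem_univ i)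
  have hprod : ∀ i j, |w i * w j| ≤ w ⬝ᵥ w := fun i j =>
    abs_le.2 ⟨by nlinarith [sq_nonneg (w i + w j), hsq i, hsq j],
      by nlinarith [sq_nonneg (w i - w j), hsq i, hsq j]⟩
  calc w ⬝ᵥ M *ᵥ w = ∑ i, ∑ j, M i j * (w i * w j) := by
        simp only [dotProduct, mulVec, Finset.mul_sum]
        exact Finset.sum_congr rfl fun i _ => Finset.sum_congr rfl fun j _ => by ring
    _ ≤ ∑ i, ∑ j, |M i j| * (w ⬝ᵥ w) :=
        Finset.sum_le_sum fun i _ => Finset.sum_le_sum fun j _ =>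
          (le_abs_self _).trans ((abs_mul _ _).trans_le
            (mul_le_mul_of_nonneg_left (hprod i j) (abs_nonneg _)))
    _ = (∑ i, ∑ j, |M i j|) * (w ⬝ᵥ w) := by simp only [Finset.sum_mul]

theorem exists_posDef_smul_one_sub [DecidableEq ι] {M : Matrix ι ι ℝ} (hM : M.IsHermitian) :
    ∃ K : ℝ, (K • 1 - M).PosDef := by
  refine ⟨1 + ∑ i, ∑ j, |M i j|, PosDef.of_dotProduct_mulVec_pos ?_ fun w hw => ?_⟩
  · simpa using (isSymm_one.smul _).sub (isHermitian_iff_isSymm.1 hM)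
  · have := dotProduct_mulVec_le_sum_abs_mul M w
    have hw' : 0 < w ⬝ᵥ w := by simpa using dotProduct_self_star_pos_iff.2 hw
    simp only [star_trivial, sub_mulVec, smul_mulVec, one_mulVec, dotProduct_sub, dotProduct_smul,
      smul_eq_mul]
    nlinarith

theorem exists_first_not_posDef {P : ℝ → Matrix ι ι ℝ} {a b : ℝ} (hP : ContinuousOn P (Icc a b))
    (hherm : ∀ t ∈ Icc a b, (P t).IsHermitian) (hb : b ∈ Icc a b) (hnot : ¬(P b).PosDef) :
    ∃ t₀ ∈ Icc a b, (∀ τ ∈ Ico a t₀, (P τ).PosDef) ∧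
      ∃ w : ι → ℝ, w ≠ 0 ∧ w ⬝ᵥ P t₀ *ᵥ w ≤ 0 := by
  let q : ℝ × (ι → ℝ) → ℝ := fun p => p.2 ⬝ᵥ P p.1 *ᵥ p.2
  have hcompact : IsCompact (Icc a b ×ˢ sphere (0 : ι → ℝ) 1) :=
    isCompact_Icc.prod (isCompact_sphere 0 1)
  have hq : ContinuousOn q (Icc a b ×ˢ sphere 0 1) :=
    (continuous_snd.dotProduct (continuous_fst.matrix_mulVec continuous_snd)).comp_continuousOn
      ((hP.comp continuousOn_fst fun p hp => hp.1).prodMk continuousOn_snd)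
  -- `bad` is the set of times in `[a, b]` at which `P` is not positive definite; it is compact
  -- because the unit sphere is.
  let bad := Prod.fst '' (Icc a b ×ˢ sphere 0 1 ∩ q ⁻¹' Iic 0)
  have hbad : IsCompact bad :=
    (hcompact.of_isClosed_subset (hq.preimage_isClosed_of_isClosed hcompact.isClosed isClosed_Iic)
      inter_subset_left).image continuous_fst
  have hmem : ∀ t ∈ Icc a b, ¬(P t).PosDef → t ∈ bad := fun t ht h => by
    obtain ⟨w, hw1, hw⟩ := (hherm t ht).exists_norm_eq_one_of_not_posDef h
    exact ⟨(t, w), ⟨⟨ht, by simpa using hw1⟩, hw⟩, rfl⟩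
  obtain ⟨t₀, ⟨⟨_, w⟩, ⟨⟨ht₀, hw1⟩, hw⟩, rfl⟩, hleast⟩ := hbad.exists_isLeast ⟨b, hmem b hb hnot⟩
  refine ⟨_, ht₀, fun τ hτ => ?_, w, ne_zero_of_mem_sphere one_ne_zero ⟨w, hw1⟩, hw⟩
  by_contra h
  exact (hleast (hmem τ ⟨hτ.1, hτ.2.le.trans ht₀.2⟩ h)).not_gt hτ.2

theorem posDef_of_hasDerivAt_pos_on_kernel {P P' : ℝ → Matrix ι ι ℝ} {a : ℝ}
    (hP : ∀ t, a ≤ t → HasDerivAt P (P' t) t) (hherm : ∀ t, a ≤ t → (P t).IsHermitian)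
    (ha : (P a).PosDef)
    (hker : ∀ t, a < t → (P t).PosSemidef → ∀ w ≠ 0, P t *ᵥ w = 0 → 0 < w ⬝ᵥ P' t *ᵥ w) :
    ∀ t, a ≤ t → (P t).PosDef := by
  intro b hab
  by_contra hb
  obtain ⟨t₀, ht₀, hbefore, w, hw0, hw⟩ :=
    exists_first_not_posDef (HasDerivAt.continuousOn fun t ht => hP t ht.1)
      (fun t ht => hherm t ht.1) ⟨hab, le_rfl⟩ hb
  have hat₀ : a < t₀ := by
    refine lt_of_le_of_ne ht₀.1 ?_
    rintro rfl
    exact (ha.dotProduct_mulVec_pos hw0).not_ge (by simpa using hw)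
  have hpos : ∀ τ ∈ Ioo a t₀, 0 < w ⬝ᵥ P τ *ᵥ w := fun τ hτ => by
    simpa using (hbefore τ (Ioo_subset_Ico_self hτ)).dotProduct_mulVec_pos hw0
  have hpsd : (P t₀).PosSemidef :=
    posSemidef_of_tendsto ((hP t₀ ht₀.1).continuousAt.tendsto.mono_left nhdsWithin_le_nhds)
      (mem_of_superset (Ioo_mem_nhdsLT hat₀) fun τ hτ =>
        (hbefore τ (Ioo_subset_Ico_self hτ)).posSemidef)
  have hkernel : P t₀ *ᵥ w = 0 := by
    refine (hpsd.dotProduct_mulVec_zero_iff w).1 ?_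
    simpa using le_antisymm hw (by simpa using hpsd.dotProduct_mulVec_nonneg w)
  refine (hker t₀ hat₀ hpsd w hw0 hkernel).not_ge
    (((hP t₀ ht₀.1).dotProduct_mulVec w w).nonpos_of_eventually_le_left ?_)
  filter_upwards [Ioo_mem_nhdsLT hat₀] with τ hτ
  exact hw.trans (hpos τ hτ).le

theorem isSymm_of_hasDerivAt (L : Matrix ι ι ℝ →ₗ[ℝ] Matrix ι ι ℝ) (hL : ∀ Z, L Zᵀ = (L Z)ᵀ)
    {Z : ℝ → Matrix ι ι ℝ} {a : ℝ} (hZ : ∀ t, a ≤ t → HasDerivAt Z (L (Z t)) t)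
    (ha : (Z a).IsSymm) : ∀ t, a ≤ t → (Z t).IsSymm := by
  intro t ht
  let L' := LinearMap.toContinuousLinearMap L
  have hY : ∀ r, a ≤ r → HasDerivAt (fun r => Z r - (Z r)ᵀ) (L' (Z r - (Z r)ᵀ)) r :=
      fun r hr => by
    rw [show L' (Z r - (Z r)ᵀ) = L (Z r) - (L (Z r))ᵀ by simp [L', hL]]
    exact (hZ r hr).sub (hZ r hr).matrix_transpose
  have hzero := ODE_solution_unique (v := fun _ => L') (fun _ => L'.lipschitz)
    (HasDerivAt.continuousOn fun r hr => hY r hr.1) (fun r hr => (hY r hr.1).hasDerivWithinAt)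
    continuousOn_const
    (fun r _ => by simpa using hasDerivWithinAt_const r (Ici r) (0 : Matrix ι ι ℝ))
    (show Z a - (Z a)ᵀ = 0 from sub_eq_zero.2 ha.symm) ⟨ht, le_rfl⟩
  exact (sub_eq_zero.1 hzero).symm

def generalizedLyapunov (A : Matrix ι ι ℝ) (N : κ → Matrix ι ι ℝ) :
    Matrix ι ι ℝ →ₗ[ℝ] Matrix ι ι ℝ where
  toFun Z := A * Z + Z * Aᵀ + ∑ k, N k * Z * (N k)ᵀ
  map_add' Z W := by
    simp only [Matrix.mul_add, Matrix.add_mul, Finset.sum_add_distrib]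
    abel
  map_smul' c Z := by
    simp [Finset.smul_sum]

theorem generalizedLyapunov_apply (A : Matrix ι ι ℝ) (N : κ → Matrix ι ι ℝ) (Z : Matrix ι ι ℝ) :
    generalizedLyapunov A N Z = A * Z + Z * Aᵀ + ∑ k, N k * Z * (N k)ᵀ := rfl

theorem generalizedLyapunov_transpose (A : Matrix ι ι ℝ) (N : κ → Matrix ι ι ℝ) (Z : Matrix ι ι ℝ) :
    generalizedLyapunov A N Zᵀ = (generalizedLyapunov A N Z)ᵀ := by
  simp only [generalizedLyapunov_apply, Matrix.mul_assoc, transpose_add, transpose_mul,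
    transpose_transpose, transpose_sum, add_left_inj]
  abel

theorem generalizedLyapunov_vecMulVec (A : Matrix ι ι ℝ) (N : κ → Matrix ι ι ℝ) (x : ι → ℝ) :
    generalizedLyapunov A N (vecMulVec x x) =
      vecMulVec (A *ᵥ x) x + vecMulVec x (A *ᵥ x) + ∑ k, vecMulVec (N k *ᵥ x) (N k *ᵥ x) := by
  simp [generalizedLyapunov_apply, mul_vecMulVec, vecMulVec_mul, vecMul_transpose]

theorem generalizedLyapunov_vecMulVec_complete_square (A : Matrix ι ι ℝ) (N : κ → Matrix ι ι ℝ)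
    (v : κ → ℝ) (x : ι → ℝ) :
    (∑ k, v k ^ 2) • vecMulVec x x + generalizedLyapunov A N (vecMulVec x x)
        - (vecMulVec (A *ᵥ x + ∑ k, v k • N k *ᵥ x) x + vecMulVec x (A *ᵥ x + ∑ k, v k • N k *ᵥ x))
      = ∑ k, vecMulVec (N k *ᵥ x - v k • x) (N k *ᵥ x - v k • x) := by
  ext i j
  have expand : ∀ k, ((N k *ᵥ x) i - v k * x i) * ((N k *ᵥ x) j - v k * x j) =
      v k ^ 2 * (x i * x j) + (N k *ᵥ x) i * (N k *ᵥ x) j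
        - v k * (N k *ᵥ x) i * x j - x i * (v k * (N k *ᵥ x) j) := fun k => by ring
  simp only [generalizedLyapunov_vecMulVec, Matrix.sub_apply, Matrix.add_apply, Matrix.smul_apply,
    vecMulVec_apply, Matrix.sum_apply, Finset.sum_apply, Pi.add_apply, Pi.sub_apply, Pi.smul_apply,
    smul_eq_mul, expand, Finset.sum_add_distrib, Finset.sum_sub_distrib]
  simp only [add_mul, mul_add, Finset.sum_mul, Finset.mul_sum]
  ring

theorem dotProduct_generalizedLyapunov_mulVec_nonneg (A : Matrix ι ι ℝ) (N : κ → Matrix ι ι ℝ)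
    {P : Matrix ι ι ℝ} (hP : P.PosSemidef) {w : ι → ℝ} (hw : P *ᵥ w = 0) :
    0 ≤ w ⬝ᵥ generalizedLyapunov A N P *ᵥ w := by
  have hwP : w ᵥ* P = 0 := by
    rw [← mulVec_transpose, (isHermitian_iff_isSymm.1 hP.isHermitian).eq, hw]
  have hN : (∑ k, N k * P * (N k)ᵀ).PosSemidef :=
    posSemidef_sum _ fun k _ => by
      simpa [conjTranspose_eq_transpose_of_trivial] using hP.mul_mul_conjTranspose_same (N k)
  simpa [generalizedLyapunov_apply, add_mulVec, ← mulVec_mulVec, hw, dotProduct_mulVec w P, hwP]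
    using hN.dotProduct_mulVec_nonneg w

theorem posDef_exp_integral_smul_sub_vecMulVec_of_posDef_source (A : Matrix ι ι ℝ)
    (N : κ → Matrix ι ι ℝ) {v : ℝ → κ → ℝ} (hv : Continuous v) {s : ℝ} {x : ℝ → ι → ℝ}
    (hx : ∀ t, s ≤ t → HasDerivAt x (A *ᵥ x t + ∑ k, v t k • N k *ᵥ x t) t)
    {Z S : ℝ → Matrix ι ι ℝ}
    (hZ : ∀ r, 0 ≤ r → HasDerivAt Z (generalizedLyapunov A N (Z r) + S r) r)
    (hZsymm : ∀ r, 0 ≤ r → (Z r).IsSymm) (hS : ∀ r, 0 ≤ r → (S r).PosDef)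
    (h0 : (Z 0 - vecMulVec (x s) (x s)).PosDef) (t : ℝ) (ht : s ≤ t) :
    (Real.exp (∫ τ in s..t, ∑ k, v τ k ^ 2) • Z (t - s) - vecMulVec (x t) (x t)).PosDef := by
  set L := generalizedLyapunov A N
  set c : ℝ → ℝ := fun τ => ∑ k, v τ k ^ 2
  set E : ℝ → ℝ := fun t => Real.exp (∫ τ in s..t, c τ)
  set R : ℝ → Matrix ι ι ℝ := fun t =>
    ∑ k, vecMulVec (N k *ᵥ x t - v t k • x t) (N k *ᵥ x t - v t k • x t)
  have hE : ∀ t, HasDerivAt E (c t * E t) t := fun t => by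
    simpa [E, mul_comm] using
      ((show Continuous c by fun_prop).integral_hasStrictDerivAt s t).hasDerivAt.exp
  have hΦ : ∀ t, s ≤ t → HasDerivAt (fun t => E t • Z (t - s) - vecMulVec (x t) (x t))
      (c t • (E t • Z (t - s) - vecMulVec (x t) (x t))
        + L (E t • Z (t - s) - vecMulVec (x t) (x t)) + R t + E t • S (t - s)) t := fun t ht => by
    refine (((hE t).smul (HasDerivAt.comp_sub_const t s (hZ (t - s) (sub_nonneg.2 ht)))).sub
      ((hx t ht).vecMulVec (hx t ht))).congr_deriv ?_
    rw [show R t = _ from (generalizedLyapunov_vecMulVec_complete_square A N (v t) (x t)).symm]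
    simp only [map_sub, map_smul]
    module
  refine posDef_of_hasDerivAt_pos_on_kernel hΦ (fun t ht => ?_) (by simpa [E] using h0)
    (fun t ht hpsd w hw hker => ?_) t ht
  · exact isHermitian_iff_isSymm.2
      (((hZsymm _ (sub_nonneg.2 ht)).smul _).sub (isSymm_vecMulVec_self _))
  · have hR : (R t).PosSemidef := posSemidef_sum _ fun k _ => by
      simpa using posSemidef_vecMulVec_self_star (N k *ᵥ x t - v t k • x t)
    have hS' : 0 < w ⬝ᵥ S (t - s) *ᵥ w := by
      simpa using (hS (t - s) (sub_nonneg.2 ht.le)).dotProduct_mulVec_pos hw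
    simp only [add_mulVec, smul_mulVec, dotProduct_add, dotProduct_smul, hker, dotProduct_zero,
      smul_eq_mul, mul_zero, zero_add]
    exact add_pos_of_nonneg_of_pos
      (add_nonneg (dotProduct_generalizedLyapunov_mulVec_nonneg A N hpsd hker)
        (by simpa using hR.dotProduct_mulVec_nonneg w))
      (mul_pos (Real.exp_pos _) hS')

theorem posSemidef_exp_integral_smul_sub_vecMulVec (A : Matrix ι ι ℝ)
    (N : κ → Matrix ι ι ℝ) {v : ℝ → κ → ℝ} (hv : Continuous v) {s : ℝ} {x : ℝ → ι → ℝ}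
    (hx : ∀ t, s ≤ t → HasDerivAt x (A *ᵥ x t + ∑ k, v t k • N k *ᵥ x t) t)
    {Z : ℝ → Matrix ι ι ℝ} (hZ : ∀ r, 0 ≤ r → HasDerivAt Z (generalizedLyapunov A N (Z r)) r)
    (h0 : (Z 0 - vecMulVec (x s) (x s)).PosSemidef) (t : ℝ) (ht : s ≤ t) :
    (Real.exp (∫ τ in s..t, ∑ k, v τ k ^ 2) • Z (t - s) - vecMulVec (x t) (x t)).PosSemidef := by
  set L := generalizedLyapunov A N
  set E := Real.exp (∫ τ in s..t, ∑ k, v τ k ^ 2)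
  have hZsymm : ∀ r, 0 ≤ r → (Z r).IsSymm := by
    refine isSymm_of_hasDerivAt L (generalizedLyapunov_transpose A N) hZ ?_
    simpa using (isHermitian_iff_isSymm.1 h0.isHermitian).add (isSymm_vecMulVec_self (x s))
  obtain ⟨K, hK⟩ := exists_posDef_smul_one_sub (M := L 1) (isHermitian_iff_isSymm.2 (by
    rw [IsSymm, ← generalizedLyapunov_transpose, transpose_one]))
  have hε : ∀ ε > 0, (E • (Z (t - s) + (ε * Real.exp (K * (t - s))) • 1)
      - vecMulVec (x t) (x t)).PosDef := fun ε hε => by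
    refine posDef_exp_integral_smul_sub_vecMulVec_of_posDef_source A N hv hx
      (Z := fun r => Z r + (ε * Real.exp (K * r)) • 1)
      (S := fun r => (ε * Real.exp (K * r)) • (K • 1 - L 1)) (fun r hr => ?_)
      (fun r hr => (hZsymm r hr).add (isSymm_one.smul _)) (fun r _ => hK.smul (by positivity))
      ?_ t ht
    · refine ((hZ r hr).add ((((hasDerivAt_id' r).const_mul K).exp.const_mul ε).smul_const
        (1 : Matrix ι ι ℝ))).congr_deriv ?_
      simp only [map_add, map_smul]
      module
    · convert PosDef.posSemidef_add h0 (PosDef.one.smul hε) using 1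
      simp only [mul_zero, Real.exp_zero, mul_one]
      abel
  refine posSemidef_of_tendsto (l := 𝓝[>] 0) ?_
    (eventually_mem_nhdsWithin.mono fun ε hε' => (hε ε hε').posSemidef)
  have hcont : Continuous fun ε : ℝ =>
      E • (Z (t - s) + (ε * Real.exp (K * (t - s))) • 1) - vecMulVec (x t) (x t) := by
    fun_prop
  simpa using (hcont.tendsto 0).mono_left nhdsWithin_le_nhds

end

theorem homogeneous_state_estimate_general
    {n m : ℕ}
    (A : Matrix (Fin n) (Fin n) ℝ) (N : Fin m → Matrix (Fin n) (Fin n) ℝ)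
    (s : ℝ) (u : ℝ → Fin m → ℝ) (hu : Continuous u)
    (u0 : ℝ → Fin m → ℝ) (hu0 : ∀ t k, u0 t k = if N k = 0 then 0 else u t k)
    -- x solves the homogeneous bilinear equation on [s,∞) with x(s) = x₀
    (x : ℝ → Fin n → ℝ) (x0 : Fin n → ℝ) (hxs : x s = x0)
    (hx : ∀ t ∈ Set.Ici s, ∀ i, HasDerivAt (fun τ => x τ i)
      ((A.mulVec (x t) + ∑ k, u t k • (N k).mulVec (x t)) i) t)
    -- Z̄ solves the matrix ODE with Z̄(0) = x₀ x₀ᵀ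
    (Zbar : ℝ → Matrix (Fin n) (Fin n) ℝ)
    (hZbar0 : Zbar 0 = vecMulVec x0 x0)
    (hZbar : ∀ t : ℝ, 0 ≤ t → ∀ i j, HasDerivAt (fun τ => Zbar τ i j)
      ((A * Zbar t + Zbar t * Aᵀ + ∑ k, N k * Zbar t * (N k)ᵀ) i j) t) :
    ∀ t : ℝ, s ≤ t →
      (Real.exp (∫ τ in s..t, ∑ k, (u0 τ k) ^ 2) • Zbar (t - s)
        - vecMulVec (x t) (x t)).PosSemidef := by
  have hu0_cont : Continuous u0 := by
    rw [show u0 = fun t k => if N k = 0 then 0 else u t k from funext₂ hu0]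
    exact continuous_pi fun k => by split_ifs <;> fun_prop
  -- `u` and `u0` differ only in channels with `N k = 0`, which do not act on the state
  have hcontrol : ∀ t k, u t k • N k *ᵥ x t = u0 t k • N k *ᵥ x t := fun t k => by
    rw [hu0]
    split_ifs with hk <;> simp [hk]
  refine posSemidef_exp_integral_smul_sub_vecMulVec A N hu0_cont
    (fun t ht => ?_) (fun r hr => hasDerivAt_matrix_iff.2 (hZbar r hr)) ?_
  · simpa only [hcontrol] using hasDerivAt_pi.2 (hx t ht)
  · rw [hZbar0, hxs, sub_self]
    exact PosSemidef.zero

/-- For the solution `x` of the homogeneous bilinear equation with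
`x(s) = x₀` and the solution `Z̄(·, x₀x₀ᵀ)` of `Ż̄ = A Z̄ + Z̄ Aᵀ + Σ_k N_k Z̄ N_kᵀ`,
`Z̄(0) = x₀ x₀ᵀ`, one has
`x(t) x(t)ᵀ ≼ exp(∫_s^t ‖u⁰(τ)‖₂² dτ) Z̄(t−s, x₀x₀ᵀ)` for all `t ≥ s`. -/
theorem homogeneous_state_estimate
    {n m : ℕ}
    (A : Matrix (Fin n) (Fin n) ℝ) (N : Fin m → Matrix (Fin n) (Fin n) ℝ)
    (s : ℝ) (hs : 0 ≤ s) (u : ℝ → Fin m → ℝ) (hu : Continuous u)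
    (u0 : ℝ → Fin m → ℝ) (hu0 : ∀ t k, u0 t k = if N k = 0 then 0 else u t k)
    -- x solves the homogeneous bilinear equation on [s,∞) with x(s) = x₀
    (x : ℝ → Fin n → ℝ) (x0 : Fin n → ℝ) (hxs : x s = x0)
    (hx : ∀ t ∈ Set.Ici s, ∀ i, HasDerivAt (fun τ => x τ i)
      ((A.mulVec (x t) + ∑ k, u t k • (N k).mulVec (x t)) i) t)
    -- Z̄ solves the matrix ODE with Z̄(0) = x₀ x₀ᵀ
    (Zbar : ℝ → Matrix (Fin n) (Fin n) ℝ)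
    (hZbar0 : Zbar 0 = vecMulVec x0 x0)
    (hZbar : ∀ t : ℝ, 0 ≤ t → ∀ i j, HasDerivAt (fun τ => Zbar τ i j)
      ((A * Zbar t + Zbar t * Aᵀ + ∑ k, N k * Zbar t * (N k)ᵀ) i j) t) :
    ∀ t : ℝ, s ≤ t →
      (Real.exp (∫ τ in s..t, ∑ k, (u0 τ k) ^ 2) • Zbar (t - s)
        - vecMulVec (x t) (x t)).PosSemidef :=
  homogeneous_state_estimate_general A N s u hu u0 hu0 x x0 hxs hx Zbar hZbar0 hZbar
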